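/- arXiv:2012.15765 — 2 statements merged into one kernel-verified Lean document; each statement's English description precedes it below -/
import Mathlib

section
/- If X₁ and X₂ are varieties over a field k of characteristic 0 and the product X₁ × X₂ is pseudo-mordellic (i.e. contains a nonempty open subset U such that U(K) is finite for every finitely generated field extension K/k), and X₁ × X₂ has a k-rational point lying in such a mordellic open subset, then X₁ is pseudo-mordellic. -/
open AlgebraicGeometry CategoryTheory Limits

universe u

noncomputable section

/-- A finitely generated field extension. -/
def FinGenExt (k K : Type u) [Field k] [Field K] [Algebra k K] : Prop :=
  (⊤ : IntermediateField k K).FG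

/-- The set of `K`-points of a scheme `X` over `k`, i.e. morphisms
`Spec K ⟶ X` lying over `Spec K ⟶ Spec k`. -/
def kPoints {k : Type u} [Field k] (K : Type u) [Field K] [Algebra k K]
    {X : Scheme.{u}} (f : X ⟶ Spec (CommRingCat.of k)) :
    Set (Spec (CommRingCat.of K) ⟶ X) :=
  {p | p ≫ f = Spec.map (CommRingCat.ofHom (algebraMap k K))}

/-- A scheme `X` over a field `k` is mordellic if `X(K)` is finite for every
finitely generated field extension `K/k`. -/
def Mordellic (k : Type u) [Field k] {X : Scheme.{u}}
    (f : X ⟶ Spec (CommRingCat.of k)) : Prop :=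
  ∀ (K : Type u) [Field K] [Algebra k K], FinGenExt k K → (kPoints K f).Finite

/-- A scheme `X` over a field `k` is pseudo-mordellic if it contains a nonempty
open subset which is mordellic. -/
def PseudoMordellic (k : Type u) [Field k] {X : Scheme.{u}}
    (f : X ⟶ Spec (CommRingCat.of k)) : Prop :=
  ∃ U : X.Opens, (U : Set X).Nonempty ∧ Mordellic k (U.ι ≫ f)

/-- A variety over a field: separated and of finite type. -/
def IsVariety {k : Type u} [Field k] {X : Scheme.{u}}
    (f : X ⟶ Spec (CommRingCat.of k)) : Prop :=
  LocallyOfFiniteType f ∧ QuasiCompact f ∧ IsSeparated f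

/-!
Slicing the product through the rational point `p = (p₁, p₂)` gives the section
`s : X₁ → X₁ ×ₖ X₂, x ↦ (x, p₂)` of the first projection. Being a monomorphism, `s` injects
the `K`-points of the open set `s⁻¹(U)` into `U(K)`, so `s⁻¹(U)` is mordellic, and it is
nonempty since it contains `p₁`.
-/

section Slice

variable {C : Type*} [Category C] {X₁ X₂ S : C} (f₁ : X₁ ⟶ S) (f₂ : X₂ ⟶ S) [HasPullback f₁ f₂]
  (p : S ⟶ pullback f₁ f₂)

def pullbackSlice (hp : p ≫ pullback.fst f₁ f₂ ≫ f₁ = 𝟙 S) : X₁ ⟶ pullback f₁ f₂ :=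
  pullback.lift (𝟙 X₁) (f₁ ≫ p ≫ pullback.snd f₁ f₂) <| by
    rw [Category.id_comp, Category.assoc, Category.assoc, ← pullback.condition, hp,
      Category.comp_id]

variable (hp : p ≫ pullback.fst f₁ f₂ ≫ f₁ = 𝟙 S)

@[simp]
lemma pullbackSlice_fst : pullbackSlice f₁ f₂ p hp ≫ pullback.fst f₁ f₂ = 𝟙 X₁ :=
  pullback.lift_fst _ _ _

lemma pullbackSlice_snd :
    pullbackSlice f₁ f₂ p hp ≫ pullback.snd f₁ f₂ = f₁ ≫ p ≫ pullback.snd f₁ f₂ :=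
  pullback.lift_snd _ _ _

instance : IsSplitMono (pullbackSlice f₁ f₂ p hp) :=
  .mk' ⟨pullback.fst f₁ f₂, pullbackSlice_fst f₁ f₂ p hp⟩

lemma fst_comp_pullbackSlice : (p ≫ pullback.fst f₁ f₂) ≫ pullbackSlice f₁ f₂ p hp = p := by
  apply pullback.hom_ext
  · simp
  · simp [pullbackSlice_snd, reassoc_of% hp]

end Slice

instance {X Y : Scheme.{u}} (g : X ⟶ Y) [Mono g] (U : Y.Opens) : Mono (g ∣_ U) :=
  have : Mono ((g ∣_ U) ≫ U.ι) := by rw [morphismRestrict_ι]; infer_instance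
  mono_of_mono _ U.ι

section Points

variable {k : Type u} [Field k]

lemma mem_kPoints_self_iff {X : Scheme.{u}} (f : X ⟶ Spec (CommRingCat.of k))
    (p : Spec (CommRingCat.of k) ⟶ X) : p ∈ kPoints k f ↔ p ≫ f = 𝟙 _ := by
  simp [kPoints, Algebra.algebraMap_self, CommRingCat.ofHom_id]

lemma Mordellic.of_mono {X Y : Scheme.{u}} {f : X ⟶ Spec (CommRingCat.of k)}
    (hX : Mordellic k f) (g : Y ⟶ X) [Mono g] : Mordellic k (g ≫ f) := by
  intro K _ _ hK
  refine Set.Finite.of_finite_image ((hX K hK).subset ?_) (f := (· ≫ g))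
    fun _ _ _ _ ↦ (cancel_mono g).mp
  rintro _ ⟨q, hq, rfl⟩
  simpa [kPoints] using hq

lemma PseudoMordellic.of_mono {X Y : Scheme.{u}} {f : X ⟶ Spec (CommRingCat.of k)}
    (U : X.Opens) (hU : Mordellic k (U.ι ≫ f)) (g : Y ⟶ X) [Mono g]
    (hne : (g ⁻¹ᵁ U : Set Y).Nonempty) : PseudoMordellic k (g ≫ f) := by
  refine ⟨g ⁻¹ᵁ U, hne, ?_⟩
  simpa [morphismRestrict_ι_assoc] using hU.of_mono (g ∣_ U)

end Points

theorem product_pseudoMordellic_factor_general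
    (k : Type u) [Field k]
    (X₁ X₂ : Scheme.{u})
    (f₁ : X₁ ⟶ Spec (CommRingCat.of k)) (f₂ : X₂ ⟶ Spec (CommRingCat.of k))
    -- a mordellic nonempty open subset `U` of the product `X₁ ×ₖ X₂` …
    (U : (pullback f₁ f₂).Opens)
    (hU : Mordellic k (U.ι ≫ pullback.fst f₁ f₂ ≫ f₁))
    -- … containing a `k`-rational point of the product
    (p : Spec (CommRingCat.of k) ⟶ pullback f₁ f₂)
    (hp : p ∈ kPoints k (pullback.fst f₁ f₂ ≫ f₁))
    (hpU : ∀ x, p.base x ∈ U) :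
    PseudoMordellic k f₁ := by
  rw [mem_kPoints_self_iff] at hp
  set s := pullbackSlice f₁ f₂ p hp
  obtain ⟨x⟩ : Nonempty (Spec (CommRingCat.of k)) := inferInstance
  have hx : s.base ((p ≫ pullback.fst f₁ f₂).base x) ∈ U := by
    rw [← Scheme.Hom.comp_apply, fst_comp_pullbackSlice]
    exact hpU x
  have hslice := PseudoMordellic.of_mono U hU s ⟨_, hx⟩
  rwa [← Category.assoc, pullbackSlice_fst, Category.id_comp] at hslice

theorem product_pseudoMordellic_factor
    (k : Type u) [Field k] [CharZero k]
    (X₁ X₂ : Scheme.{u})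
    (f₁ : X₁ ⟶ Spec (CommRingCat.of k)) (f₂ : X₂ ⟶ Spec (CommRingCat.of k))
    (hX₁ : IsVariety f₁) (hX₂ : IsVariety f₂)
    -- a mordellic nonempty open subset `U` of the product `X₁ ×ₖ X₂` …
    (U : (pullback f₁ f₂).Opens)
    (hUne : (U : Set (pullback f₁ f₂ : Scheme.{u})).Nonempty)
    (hU : Mordellic k (U.ι ≫ pullback.fst f₁ f₂ ≫ f₁))
    -- … containing a `k`-rational point of the product
    (p : Spec (CommRingCat.of k) ⟶ pullback f₁ f₂)
    (hp : p ∈ kPoints k (pullback.fst f₁ f₂ ≫ f₁))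
    (hpU : ∀ x, p.base x ∈ U) :
    PseudoMordellic k f₁ :=
  product_pseudoMordellic_factor_general k X₁ X₂ f₁ f₂ U hU p hp hpU
end
end

section
/- Let V be a variety over a field k admitting a dominant, generically finite rational map V ⇢ ℙⁿ of degree d, and assume k is infinite (so ℙⁿ(k) is Zariski-dense). Then the set V_d = {p ∈ V closed point : [k(p) : k] ≤ d} is Zariski-dense in V. -/
/-!
Every nonempty open of `V` contains a nonempty affine open `U`; `Γ(V, U)` is a finitely
generated `k`-algebra mapping to the function field `K`, which has a basis `e` of size `d` over
`L = k(x₁, …, xₙ)`. After inverting a single nonzero polynomial `z`, the `k[x][1/z]`-span of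
`e` becomes a subalgebra of `K` containing the image of `Γ(V, U)`. As `k` is infinite, some
`a ∈ kⁿ` has `z(a) ≠ 0`; by lying over, the maximal ideal of `a` in `k[x][1/z]` lies under a
maximal ideal of that subalgebra, whose residue field is spanned over `k` by the images of `e`.
The resulting point of `U` therefore has residue degree at most `d`.
-/

open AlgebraicGeometry CategoryTheory Limits

universe u

noncomputable section

theorem exists_mem_nonZeroDivisors_smul_mem_span {R L K ι : Type*} [CommRing R] [CommRing L]
    [Algebra R L] [IsFractionRing R L] [AddCommGroup K] [Module R K] [Module L K]
    [IsScalarTower R L K] [Fintype ι] (b : Module.Basis ι L K) (S : Finset K) :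
    ∃ z ∈ nonZeroDivisors R, ∀ x ∈ S, z • x ∈ Submodule.span R (Set.range b) := by
  obtain ⟨⟨z, hz⟩, hint⟩ := IsLocalization.exist_integer_multiples (nonZeroDivisors R)
    (S ×ˢ Finset.univ) fun p : K × ι => b.repr p.1 p.2
  refine ⟨z, hz, fun x hx => ?_⟩
  rw [← b.sum_repr x, Finset.smul_sum]
  refine Submodule.sum_mem _ fun i _ => ?_
  obtain ⟨r, hr⟩ := hint (x, i) (Finset.mem_product.mpr ⟨hx, Finset.mem_univ i⟩)
  rw [← smul_assoc, ← hr, algebraMap_smul]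
  exact Submodule.smul_mem _ _ (Submodule.subset_span (Set.mem_range_self i))

theorem mem_span_of_smul_mem_span {R R' M : Type*} [CommRing R] [CommRing R'] [Algebra R R']
    [AddCommGroup M] [Module R M] [Module R' M] [IsScalarTower R R' M] (z : R)
    [IsLocalization.Away z R'] {s : Set M} {x : M} (h : z • x ∈ Submodule.span R s) :
    x ∈ Submodule.span R' s := by
  have hz := (IsLocalization.Away.algebraMap_isUnit z : IsUnit (algebraMap R R' z))
  rw [← one_smul R' x, ← hz.unit.inv_mul, mul_smul, hz.unit_spec, algebraMap_smul]
  exact Submodule.smul_mem _ _ (Submodule.span_le_restrictScalars R R' s h)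

theorem IsLocalization.Away.lift_injective {R S P : Type*} [CommRing R] [CommRing S]
    [CommRing P] [Algebra R S] {z : R} [IsLocalization.Away z S] {g : R →+* P}
    (hg : Function.Injective g) (hgz : IsUnit (g z)) :
    Function.Injective (IsLocalization.Away.lift z hgz : S →+* P) := by
  have hz : z ∈ nonZeroDivisors R := mem_nonZeroDivisors_of_injective hg hgz.mem_nonZeroDivisors
  refine (IsLocalization.lift_injective_iff _).mpr fun x y => ?_
  rw [(IsLocalization.injective S (Submonoid.powers_le.mpr hz)).eq_iff, hg.eq_iff]

theorem exists_algHom_finrank_le_of_span_eq_top {k R : Type*} {B : Type u} [Field k]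
    [CommRing R] [CommRing B] [Algebra k R] [Algebra R B] [Algebra k B] [IsScalarTower k R B]
    (π : R →ₐ[k] k) (hker : RingHom.ker (algebraMap R B) ≤ RingHom.ker π)
    {d : ℕ} (v : Fin d → B) (hv : Submodule.span R (Set.range v) = ⊤) :
    ∃ (F : Type u) (_ : Field F) (_ : Algebra k F),
      FiniteDimensional k F ∧ Module.finrank k F ≤ d ∧ Nonempty (B →ₐ[k] F) := by
  have : Module.Finite R B := ⟨hv ▸ Submodule.fg_span (Set.finite_range v)⟩
  have : (RingHom.ker π).IsMaximal :=
    RingHom.ker_isMaximal_of_surjective π fun c => ⟨algebraMap k R c, π.commutes c⟩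
  obtain ⟨P, hP, hPπ⟩ := Ideal.exists_ideal_over_maximal_of_isIntegral (RingHom.ker π) hker
  let F := B ⧸ P
  let q : B →ₐ[k] F := Ideal.Quotient.mkₐ k P
  have hq_smul (r : R) (x : B) : q (r • x) = π r • q x := by
    have hr : r - algebraMap k R (π r) ∈ P.comap (algebraMap R B) := by
      simp [hPπ, RingHom.mem_ker]
    have : q (algebraMap R B r) = algebraMap k F (π r) := by
      rw [← q.commutes, ← sub_eq_zero, ← map_sub, IsScalarTower.algebraMap_apply k R B,
        ← map_sub]
      exact Ideal.Quotient.eq_zero_iff_mem.mpr hr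
    rw [Algebra.smul_def, map_mul, this, Algebra.smul_def]
  have hspan : Submodule.span k (Set.range (q ∘ v)) = ⊤ := by
    refine eq_top_iff.mpr fun y _ => ?_
    obtain ⟨x, rfl⟩ := Ideal.Quotient.mkₐ_surjective k P y
    have hx : x ∈ Submodule.span R (Set.range v) := hv ▸ trivial
    obtain ⟨c, rfl⟩ := Submodule.mem_span_range_iff_exists_fun R |>.mp hx
    rw [map_sum]
    refine Submodule.sum_mem _ fun i _ => ?_
    rw [hq_smul]
    exact Submodule.smul_mem _ _ (Submodule.subset_span (Set.mem_range_self i))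
  have : FiniteDimensional k F := ⟨hspan ▸ Submodule.fg_span (Set.finite_range _)⟩
  refine ⟨F, Ideal.Quotient.field P, inferInstance, this, ?_, ⟨q⟩⟩
  calc Module.finrank k F = Module.finrank k (Submodule.span k (Set.range (q ∘ v))) := by
        rw [hspan, finrank_top]
    _ ≤ d := (finrank_range_le_card _).trans_eq (Fintype.card_fin d)

theorem exists_algHom_finrank_le_of_mem_span {k R A : Type*} {K : Type u}
    [Field k] [CommRing R] [Algebra k R] [CommRing K] [Algebra R K] [Algebra k K]
    [IsScalarTower k R K] [Semiring A] [Algebra k A] (π : R →ₐ[k] k)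
    (hker : RingHom.ker (algebraMap R K) ≤ RingHom.ker π) {d : ℕ} (e : Fin d → K)
    (hone : 1 ∈ Submodule.span R (Set.range e))
    (hmul : ∀ i j, e i * e j ∈ Submodule.span R (Set.range e))
    {s : Set A} (hs : Algebra.adjoin k s = ⊤) (ι : A →ₐ[k] K)
    (hι : ∀ a ∈ s, ι a ∈ Submodule.span R (Set.range e)) :
    ∃ (F : Type u) (_ : Field F) (_ : Algebra k F), FiniteDimensional k F ∧
      Module.finrank k F ≤ d ∧ Nonempty (A →ₐ[k] F) := by
  let M := Submodule.span R (Set.range e)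
  have hMM : M * M ≤ M := by
    rw [Submodule.span_mul_span]
    refine Submodule.span_le.mpr ?_
    rintro _ ⟨_, ⟨i, rfl⟩, _, ⟨j, rfl⟩, rfl⟩
    exact hmul i j
  let B : Subalgebra R K :=
    M.toSubalgebra hone fun x y hx hy => hMM (Submodule.mul_mem_mul hx hy)
  let v i : B := ⟨e i, Submodule.subset_span (Set.mem_range_self i)⟩
  have hv : Submodule.span R (Set.range v) = ⊤ := by
    refine eq_top_iff.mpr fun b _ => ?_
    obtain ⟨c, hc⟩ := (Submodule.mem_span_range_iff_exists_fun R).mp b.2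
    exact (Submodule.mem_span_range_iff_exists_fun R).mpr ⟨c, Subtype.ext (by simpa using hc)⟩
  have hkerB : RingHom.ker (algebraMap R B) ≤ RingHom.ker π := fun r hr =>
    hker (congrArg Subtype.val hr)
  have hιB (a : A) : ι a ∈ B.restrictScalars k :=
    (hs ▸ Algebra.adjoin_le hι : ⊤ ≤ (B.restrictScalars k).comap ι) trivial
  obtain ⟨F, _, _, hF, hFd, ⟨φ⟩⟩ := exists_algHom_finrank_le_of_span_eq_top π hkerB v hv
  exact ⟨F, _, _, hF, hFd, ⟨φ.comp (ι.codRestrict (B.restrictScalars k) hιB)⟩⟩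

theorem exists_algHom_finrank_le_finrank_of_finiteType {k R L : Type*} {K : Type u} {A : Type*}
    [Field k] [CommRing R] [Algebra k R] [Field L] [Algebra R L] [IsFractionRing R L]
    [Algebra k L] [IsScalarTower k R L] [CommRing K] [Nontrivial K] [Algebra L K] [Algebra k K]
    [IsScalarTower k L K] [FiniteDimensional L K] [Semiring A] [Algebra k A]
    [Algebra.FiniteType k A]
    (hdense : ∀ z ∈ nonZeroDivisors R, ∃ π : R →ₐ[k] k, π z ≠ 0)
    (ι : A →ₐ[k] K) :
    ∃ (F : Type u) (_ : Field F) (_ : Algebra k F), FiniteDimensional k F ∧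
      Module.finrank k F ≤ Module.finrank L K ∧ Nonempty (A →ₐ[k] F) := by
  classical
  let : Algebra R K := ((algebraMap L K).comp (algebraMap R L)).toAlgebra
  have : IsScalarTower R L K := .of_algebraMap_eq' rfl
  have : IsScalarTower k R K := .of_algebraMap_eq fun c => by
    rw [IsScalarTower.algebraMap_apply k L K, IsScalarTower.algebraMap_apply k R L,
      ← IsScalarTower.algebraMap_apply R L K]
  have hRK : Function.Injective (algebraMap R K) := by
    rw [IsScalarTower.algebraMap_eq R L K]
    exact (algebraMap L K).injective.comp (IsFractionRing.injective R L)
  let e := Module.finBasis L K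
  obtain ⟨s, hs⟩ := Algebra.FiniteType.out (R := k) (A := A)
  let S : Finset K :=
    insert 1 (s.image ι ∪ Finset.univ.image fun p : Fin _ × Fin _ => e p.1 * e p.2)
  obtain ⟨z, hz, hzS⟩ := exists_mem_nonZeroDivisors_smul_mem_span (R := R) e S
  obtain ⟨π₀, hπ₀⟩ := hdense z hz
  let R' := Localization.Away z
  have hzK : IsUnit (algebraMap R K z) := by
    rw [IsScalarTower.algebraMap_apply R L K]
    exact (IsLocalization.map_units L (⟨z, hz⟩ : nonZeroDivisors R)).map _
  let : Algebra R' K := (IsLocalization.Away.lift z hzK).toAlgebra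
  have : IsScalarTower R R' K :=
    .of_algebraMap_eq fun r => (IsLocalization.Away.lift_eq z hzK r).symm
  have : IsScalarTower k R' K := .of_algebraMap_eq fun c => by
    rw [IsScalarTower.algebraMap_apply k R R', IsScalarTower.algebraMap_apply k R K,
      IsScalarTower.algebraMap_apply R R' K]
  have hR'K : Function.Injective (algebraMap R' K) := IsLocalization.Away.lift_injective hRK hzK
  have hSM : ∀ x ∈ S, x ∈ Submodule.span R' (Set.range e) :=
    fun x hx => mem_span_of_smul_mem_span z (hzS x hx)
  refine exists_algHom_finrank_le_of_mem_span
    (IsLocalization.Away.liftAlgHom z (isUnit_iff_ne_zero.mpr hπ₀)) ?_ e (hSM 1 (by simp [S]))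
    (fun i j => hSM _ (by simp [S])) hs ι fun a ha => hSM _ ?_
  · rw [(RingHom.injective_iff_ker_eq_bot _).mp hR'K]
    exact bot_le
  · exact Finset.mem_insert_of_mem (Finset.mem_union_left _ (Finset.mem_image_of_mem ι ha))

theorem MvPolynomial.exists_algHom_ne_zero {k σ : Type*} [CommRing k] [IsDomain k] [Infinite k]
    {p : MvPolynomial σ k} (hp : p ≠ 0) :
    ∃ π : MvPolynomial σ k →ₐ[k] k, π p ≠ 0 := by
  by_contra! h
  exact hp (funext fun x => by simpa [coe_aeval_eq_eval] using h (aeval x))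

namespace AlgebraicGeometry

variable {k : Type u} [Field k] {X : Scheme.{u}} (f : X ⟶ Spec (CommRingCat.of k))
  {U : X.Opens} (hU : IsAffineOpen U) [Algebra k Γ(X, U)]
  (hUf : Spec.map (CommRingCat.ofHom (algebraMap k Γ(X, U))) = hU.fromSpec ≫ f)
include hUf

theorem IsAffineOpen.finiteType_of_Spec_map_algebraMap [LocallyOfFiniteType f] :
    Algebra.FiniteType k Γ(X, U) := by
  rw [← RingHom.finiteType_algebraMap, ← CommRingCat.hom_ofHom (algebraMap k Γ(X, U)),
    ← HasRingHomProperty.Spec_iff (P := @LocallyOfFiniteType), hUf]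
  infer_instance

theorem IsAffineOpen.Spec_map_comp_fromSpec_mem_kPoints {K : Type u} [Field K] [Algebra k K]
    (φ : Γ(X, U) →ₐ[k] K) :
    Spec.map (CommRingCat.ofHom φ.toRingHom) ≫ hU.fromSpec ∈ kPoints K f := by
  rw [kPoints, Set.mem_ofPred_eq, Category.assoc, ← hUf, ← Spec.map_comp]
  congr 1
  ext c
  exact φ.commutes c

theorem IsAffineOpen.nonempty_algHom_of_mem_kPoints {K : Type u} [Field K] [Algebra k K]
    {p : Spec (CommRingCat.of K) ⟶ X} (hp : p ∈ kPoints K f) (hpU : Set.range p.base ⊆ U) :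
    Nonempty (Γ(X, U) →ₐ[k] K) := by
  let t := IsOpenImmersion.lift hU.fromSpec p (hU.range_fromSpec ▸ hpU)
  obtain ⟨τ, hτ⟩ := Spec.map_surjective t
  have hτk :
      CommRingCat.ofHom (algebraMap k Γ(X, U)) ≫ τ = CommRingCat.ofHom (algebraMap k K) := by
    apply Spec.map_injective
    rw [Spec.map_comp, hτ, hUf, IsOpenImmersion.lift_fac_assoc]
    exact hp
  exact ⟨{ τ.hom with commutes' := fun c => congrArg (fun g => g.hom c) hτk }⟩

end AlgebraicGeometry

theorem dense_bounded_degree_points_of_generically_finite_general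
    (k : Type u) [Field k] [Infinite k] (n d : ℕ)
    (V : Scheme.{u}) (fV : V ⟶ Spec (CommRingCat.of k))
    (hV : IsVariety fV)
    -- `η` is the generic point, so `κ(η) = k(V)` is the function field of `V`
    (η : V) (hη : IsGenericPoint η Set.univ)
    -- the `k`-algebra structure of the function field induced by `fV`
    [Algebra k (V.residueField η)]
    (halg : Spec.map (CommRingCat.ofHom (algebraMap k (V.residueField η))) =
      V.fromSpecResidueField η ≫ fV)
    -- a dominant, generically finite rational map `V ⇢ ℙⁿ` of degree `d`,
    -- i.e. a degree-`d` field extension `k(ℙⁿ) = k(x₁,…,xₙ) ⊆ k(V)` over `k`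
    [Algebra (FractionRing (MvPolynomial (Fin n) k)) (V.residueField η)]
    [IsScalarTower k (FractionRing (MvPolynomial (Fin n) k)) (V.residueField η)]
    [FiniteDimensional (FractionRing (MvPolynomial (Fin n) k)) (V.residueField η)]
    (hdeg : Module.finrank (FractionRing (MvPolynomial (Fin n) k))
      (V.residueField η) = d) :
    -- the set `V_d` of closed points of residue degree at most `d` is dense
    Dense {x : V | ∃ (h : Type u) (_ : Field h) (_ : Algebra k h),
      FiniteDimensional k h ∧ Module.finrank k h ≤ d ∧
      ∃ q ∈ kPoints h fV, q.base (IsLocalRing.closedPoint h) = x} := by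
  rw [dense_iff_inter_open]
  rintro W hW ⟨x, hxW⟩
  obtain ⟨U, hU, hxU, hUW⟩ :=
    TopologicalSpace.Opens.isBasis_iff_nbhd.mp V.isBasis_affineOpens (U := ⟨W, hW⟩) hxW
  have hU : IsAffineOpen U := hU
  obtain ⟨σ, hσ⟩ := Spec.map_surjective (hU.fromSpec ≫ fV)
  let : Algebra k Γ(V, U) := σ.hom.toAlgebra
  have : LocallyOfFiniteType fV := hV.1
  have : Algebra.FiniteType k Γ(V, U) := hU.finiteType_of_Spec_map_algebraMap fV hσ
  have hηU : η ∈ U := (hη.mem_open_set_iff U.isOpen).mpr ⟨x, trivial, hxU⟩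
  obtain ⟨ι⟩ := hU.nonempty_algHom_of_mem_kPoints fV hσ (K := V.residueField η) halg.symm
    (by rw [Scheme.range_fromSpecResidueField]; exact Set.singleton_subset_iff.mpr hηU)
  obtain ⟨F, _, _, hF, hFd, ⟨φ⟩⟩ := exists_algHom_finrank_le_finrank_of_finiteType
    (R := MvPolynomial (Fin n) k) (L := FractionRing (MvPolynomial (Fin n) k))
    (fun z hz => MvPolynomial.exists_algHom_ne_zero (nonZeroDivisors.ne_zero hz)) ι
  let q := Spec.map (CommRingCat.ofHom φ.toRingHom) ≫ hU.fromSpec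
  refine ⟨q.base (IsLocalRing.closedPoint F), hUW ?_, F, _, _, hF, hdeg ▸ hFd, q,
    hU.Spec_map_comp_fromSpec_mem_kPoints fV hσ φ, rfl⟩
  exact hU.range_fromSpec.subset ⟨_, rfl⟩

theorem dense_bounded_degree_points_of_generically_finite
    (k : Type u) [Field k] [Infinite k] (n d : ℕ)
    (V : Scheme.{u}) (fV : V ⟶ Spec (CommRingCat.of k)) [IsIntegral V]
    (hV : IsVariety fV)
    -- `η` is the generic point, so `κ(η) = k(V)` is the function field of `V`
    (η : V) (hη : IsGenericPoint η Set.univ)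
    -- the `k`-algebra structure of the function field induced by `fV`
    [Algebra k (V.residueField η)]
    (halg : Spec.map (CommRingCat.ofHom (algebraMap k (V.residueField η))) =
      V.fromSpecResidueField η ≫ fV)
    -- a dominant, generically finite rational map `V ⇢ ℙⁿ` of degree `d`,
    -- i.e. a degree-`d` field extension `k(ℙⁿ) = k(x₁,…,xₙ) ⊆ k(V)` over `k`
    [Algebra (FractionRing (MvPolynomial (Fin n) k)) (V.residueField η)]
    [IsScalarTower k (FractionRing (MvPolynomial (Fin n) k)) (V.residueField η)]
    [FiniteDimensional (FractionRing (MvPolynomial (Fin n) k)) (V.residueField η)]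
    (hdeg : Module.finrank (FractionRing (MvPolynomial (Fin n) k))
      (V.residueField η) = d) :
    -- the set `V_d` of closed points of residue degree at most `d` is dense
    Dense {x : V | ∃ (h : Type u) (_ : Field h) (_ : Algebra k h),
      FiniteDimensional k h ∧ Module.finrank k h ≤ d ∧
      ∃ q ∈ kPoints h fV, q.base (IsLocalRing.closedPoint h) = x} :=
  dense_bounded_degree_points_of_generically_finite_general k n d V fV hV η hη halg hdeg
end
end
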